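/- Let I be a good ideal in K[x_1,…,x_n] and let a_1,…,a_n, a, t be nonnegative integers with a_1+⋯+a_n = a and t ≥ 1. Then I^{a+t} : ⟨μ_1^{a_1}⋯μ_n^{a_n}⟩ = Σ_{t_1,…,t_n ≥ 0, t_1+⋯+t_n = t−1} μ_1^{t_1}⋯μ_n^{t_n}·I_{t_1+a_1,…,t_n+a_n}, where the sum is the sum of ideals. -/

import Mathlib

/-!
Weight a point `α ∈ ℕⁿ` by `w(α) = ∑ αᵢ / dᵢ`. A minimal generator of `I^l` lying in a box with
coordinate sum `l - 1` has weight at least `l - 1`; applied to `x^{Nβ} ∈ I^{lN}` for all `N`, this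
gives `w(β) ≥ l` for every monomial `x^β ∈ I^l`. Since `μ^c μ_j` has weight exactly `|c| + 1`, it is
a minimal generator of `I^{|c|+1}`, lying in the box `B_c`.

If `x^γ μ^a ∈ I^{|a|+t}`, some minimal generator of `I^{|a|+t}` below `x^γ μ^a` lies in a box `B_b`
with `|b| = |a| + t - 1`. When `b ≥ a` it is a generator of the summand indexed by `b - a`.
Otherwise `|a ⊔ b| > |b|`, and for any `a ≤ c ≤ a ⊔ b` with `|c| = |b|` some corner generator
`μ^c μ_j` divides `μ^{a ⊔ b}`, which divides `x^γ μ^a`. The reverse inclusion is immediate.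
-/

open MvPolynomial

namespace GasanovaRR

/-- The monomial `x^α` in `K[x_1,…,x_n]`. -/
noncomputable def mono (K : Type*) [Field K] {n : ℕ} (α : Fin n → ℕ) :
    MvPolynomial (Fin n) K :=
  MvPolynomial.monomial (Finsupp.equivFunOnFinite.symm α) 1

/-- `I` is a monomial ideal: it is generated by a set of monomials. -/
def IsMonomialIdeal {K : Type*} [Field K] {n : ℕ}
    (I : Ideal (MvPolynomial (Fin n) K)) : Prop :=
  ∃ A : Set (Fin n → ℕ), I = Ideal.span (mono K '' A)

/-- `x^α` is a minimal monomial generator of `I`, i.e. `x^α ∈ G(I)`: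
`x^α ∈ I` and no monomial in `I` strictly divides it. -/
def IsMinGen {K : Type*} [Field K] {n : ℕ}
    (I : Ideal (MvPolynomial (Fin n) K)) (α : Fin n → ℕ) : Prop :=
  mono K α ∈ I ∧ ∀ β : Fin n → ℕ, mono K β ∈ I → β ≤ α → β = α

/-- The point `α` lies in the box `B_{a_1,…,a_n}` (for box sizes `d_1,…,d_n`). -/
def InBox {n : ℕ} (d a α : Fin n → ℕ) : Prop :=
  ∀ i, a i * d i ≤ α i ∧ α i ≤ (a i + 1) * d i

/-- `I` is a good ideal (w.r.t. box sizes `d`): for every `l ≥ 1`, every minimal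
generator of `I^l` lies in a box whose coordinate sum is `l - 1`. -/
def IsGood {K : Type*} [Field K] {n : ℕ}
    (I : Ideal (MvPolynomial (Fin n) K)) (d : Fin n → ℕ) : Prop :=
  ∀ l : ℕ, 1 ≤ l → ∀ α : Fin n → ℕ, IsMinGen (I ^ l) α →
    ∃ a : Fin n → ℕ, InBox d a α ∧ ∑ i, a i = l - 1

/-- `I` is an `𝔪`-primary monomial ideal whose minimal generating set contains
`μ_i = x_i^{d_i}` with `d_i > 0` for each `i`. -/
def MPrimaryWithCorners {K : Type*} [Field K] {n : ℕ}
    (I : Ideal (MvPolynomial (Fin n) K)) (d : Fin n → ℕ) : Prop :=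
  IsMonomialIdeal I ∧ I ≠ ⊤ ∧ (∀ i, 0 < d i) ∧ ∀ i, IsMinGen I (Pi.single i (d i))

/-- The ideal `I_{a_1,…,a_n}` associated to the box `B_{a_1,…,a_n}`, generated by
`m / (μ_1^{a_1}⋯μ_n^{a_n})` for `m ∈ B_{a_1,…,a_n} ∩ G(I^l)`, `l = a_1+⋯+a_n+1`. -/
noncomputable def boxIdeal {K : Type*} [Field K] {n : ℕ}
    (I : Ideal (MvPolynomial (Fin n) K)) (d a : Fin n → ℕ) :
    Ideal (MvPolynomial (Fin n) K) :=
  Ideal.span ((fun α => mono K (α - fun i => a i * d i)) ''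
    {α | InBox d a α ∧ IsMinGen (I ^ (∑ i, a i + 1)) α})

/-- The Ratliff–Rush closure `Ĩ = ⋃_{k ≥ 0} (I^{k+1} : I^k)`. -/
noncomputable def ratliffRush {K : Type*} [Field K] {n : ℕ}
    (I : Ideal (MvPolynomial (Fin n) K)) : Ideal (MvPolynomial (Fin n) K) :=
  ⨆ k : ℕ, (I ^ (k + 1)).colon ((I ^ k : Ideal (MvPolynomial (Fin n) K)) : Set (MvPolynomial (Fin n) K))

/-- The cone in `ℕ^n` with set `S` of fixed coordinates and vertex `v`. -/
def Cone {n : ℕ} (S : Set (Fin n)) (v : Fin n → ℕ) : Set (Fin n → ℕ) :=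
  {b | (∀ i ∈ S, b i = v i) ∧ ∀ i ∉ S, v i ≤ b i}

/-- `I` is a very good ideal: it is good and `I_{a_1,…,a_n} = I` for all boxes. -/
def IsVeryGood {K : Type*} [Field K] {n : ℕ}
    (I : Ideal (MvPolynomial (Fin n) K)) (d : Fin n → ℕ) : Prop :=
  IsGood I d ∧ ∀ a : Fin n → ℕ, boxIdeal I d a = I

section Monomials

variable {K : Type*} [Field K] {n : ℕ}

lemma mono_eq_prod_X_pow (α : Fin n → ℕ) : mono K α = ∏ i, X i ^ α i := by
  rw [mono, monomial_eq, C_1, one_mul, Finsupp.prod_fintype _ _ (fun i => pow_zero _)]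
  rfl

lemma mono_single (i : Fin n) (k : ℕ) : mono K (Pi.single i k) = X i ^ k := by
  classical
  rw [mono, Finsupp.equivFunOnFinite_symm_single, X_pow_eq_monomial]

lemma mono_add (α β : Fin n → ℕ) : mono K (α + β) = mono K α * mono K β := by
  simp only [mono_eq_prod_X_pow, Pi.add_apply, pow_add, Finset.prod_mul_distrib]

lemma mono_nsmul (k : ℕ) (α : Fin n → ℕ) : mono K (k • α) = mono K α ^ k := by
  simp only [mono_eq_prod_X_pow, Pi.smul_apply, smul_eq_mul, ← Finset.prod_pow, mul_comm k,
    pow_mul]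

lemma mono_zero : mono K (0 : Fin n → ℕ) = 1 := by
  simp [mono_eq_prod_X_pow]

lemma mono_coe (v : Fin n →₀ ℕ) : mono K ⇑v = monomial v 1 := by
  rw [mono, Finsupp.equivFunOnFinite_symm_coe]

lemma mono_mem_of_le {J : Ideal (MvPolynomial (Fin n) K)} {α β : Fin n → ℕ}
    (hα : mono K α ∈ J) (hle : α ≤ β) : mono K β ∈ J := by
  rw [← tsub_add_cancel_of_le hle, mono_add]
  exact J.mul_mem_left _ hα

lemma mem_of_forall_mono_mem {J : Ideal (MvPolynomial (Fin n) K)} {p : MvPolynomial (Fin n) K}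
    (h : ∀ v ∈ p.support, mono K ⇑v ∈ J) : p ∈ J := by
  rw [p.as_sum]
  refine J.sum_mem fun v hv => ?_
  rw [← mul_one (coeff v p), ← C_mul_monomial, ← mono_coe]
  exact J.mul_mem_left _ (h v hv)

lemma exists_isMinGen_le {J : Ideal (MvPolynomial (Fin n) K)} {β : Fin n → ℕ}
    (hβ : mono K β ∈ J) : ∃ α ≤ β, IsMinGen J α := by
  obtain ⟨α, ⟨hαβ, hα⟩, hmin⟩ :=
    wellFounded_lt.has_min {α | α ≤ β ∧ mono K α ∈ J} ⟨β, le_rfl, hβ⟩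
  exact ⟨α, hαβ, hα, fun γ hγ hγα =>
    by_contra fun hne => hmin γ ⟨hγα.trans hαβ, hγ⟩ (lt_of_le_of_ne hγα hne)⟩

end Monomials

namespace IsMonomialIdeal

variable {K : Type*} [Field K] {n : ℕ} {J J' : Ideal (MvPolynomial (Fin n) K)}

lemma mul (hJ : IsMonomialIdeal J) (hJ' : IsMonomialIdeal J') : IsMonomialIdeal (J * J') := by
  obtain ⟨A, rfl⟩ := hJ
  obtain ⟨B, rfl⟩ := hJ'
  refine ⟨Set.image2 (· + ·) A B, ?_⟩
  rw [Ideal.span_mul_span', ← Set.image2_mul,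
    Set.image_image2_distrib fun α β => mono_add (K := K) α β]

lemma pow (hJ : IsMonomialIdeal J) (k : ℕ) : IsMonomialIdeal (J ^ k) := by
  induction k with
  | zero => exact ⟨{0}, by rw [pow_zero, Set.image_singleton, mono_zero, Ideal.span_singleton_one,
      Ideal.one_eq_top]⟩
  | succ k ih => exact pow_succ J k ▸ ih.mul hJ

lemma mono_mem_of_mem_support (hJ : IsMonomialIdeal J) {p : MvPolynomial (Fin n) K}
    (hp : p ∈ J) {v : Fin n →₀ ℕ} (hv : v ∈ p.support) : mono K ⇑v ∈ J := by
  obtain ⟨A, rfl⟩ := hJ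
  have hA : mono K '' A =
      (fun s => monomial s (1 : K)) '' (Finsupp.equivFunOnFinite.symm '' A) := by
    rw [Set.image_image]; rfl
  obtain ⟨_, ⟨α, hα, rfl⟩, hαv⟩ := mem_ideal_span_monomial_image.1 (hA ▸ hp) v hv
  exact mono_mem_of_le (Ideal.subset_span ⟨α, hα, rfl⟩) fun i => hαv i

lemma mono_add_mem_of_mul_mem (hJ : IsMonomialIdeal J) {p : MvPolynomial (Fin n) K}
    {w : Fin n → ℕ} (hp : p * mono K w ∈ J) {v : Fin n →₀ ℕ} (hv : v ∈ p.support) :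
    mono K (⇑v + w) ∈ J := by
  have hvw : v + Finsupp.equivFunOnFinite.symm w ∈ (p * mono K w).support := by
    rw [mem_support_iff, mono, coeff_mul_monomial, mul_one]
    exact mem_support_iff.1 hv
  simpa using hJ.mono_mem_of_mem_support hp hvw

end IsMonomialIdeal

section WeightedDegree

variable {n : ℕ} {d : Fin n → ℕ}

def weightedDegree (d α : Fin n → ℕ) : ℚ := ∑ i, (α i : ℚ) / d i

lemma weightedDegree_nonneg (α : Fin n → ℕ) : 0 ≤ weightedDegree d α := by
  unfold weightedDegree; positivity

lemma weightedDegree_mono {α β : Fin n → ℕ} (h : α ≤ β) :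
    weightedDegree d α ≤ weightedDegree d β :=
  Finset.sum_le_sum fun i _ => div_le_div_of_nonneg_right (by exact_mod_cast h i) (by positivity)

lemma eq_of_le_of_weightedDegree_le (hd : ∀ i, 0 < d i) {α β : Fin n → ℕ} (h : α ≤ β)
    (h' : weightedDegree d β ≤ weightedDegree d α) : α = β := by
  have hterm := (Finset.sum_eq_sum_iff_of_le fun i _ =>
    div_le_div_of_nonneg_right (by exact_mod_cast h i) (by positivity)).1
    (le_antisymm (weightedDegree_mono h) h')
  funext i
  have hi := hterm i (Finset.mem_univ i)
  rwa [div_left_inj' (by exact_mod_cast (hd i).ne'), Nat.cast_inj] at hi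

lemma weightedDegree_nsmul (k : ℕ) (α : Fin n → ℕ) :
    weightedDegree d (k • α) = k * weightedDegree d α := by
  simp only [weightedDegree, Finset.mul_sum, Pi.smul_apply, smul_eq_mul, Nat.cast_mul,
    mul_div_assoc]

lemma sum_le_weightedDegree_of_inBox (hd : ∀ i, 0 < d i) {a α : Fin n → ℕ} (h : InBox d a α) :
    ((∑ i, a i : ℕ) : ℚ) ≤ weightedDegree d α := by
  push_cast
  exact Finset.sum_le_sum fun i _ =>
    (le_div_iff₀ (by exact_mod_cast hd i)).2 (by exact_mod_cast (h i).1)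

lemma weightedDegree_corner (hd : ∀ i, 0 < d i) (c : Fin n → ℕ) (j : Fin n) :
    weightedDegree d ((fun i => c i * d i) + Pi.single j (d j)) = ∑ i, c i + 1 := by
  have hd' : ∀ i, (d i : ℚ) ≠ 0 := fun i => by exact_mod_cast (hd i).ne'
  simp [weightedDegree, add_div, Finset.sum_add_distrib, Pi.single_apply, ite_div, hd']

lemma inBox_corner (c : Fin n → ℕ) (j : Fin n) :
    InBox d c ((fun i => c i * d i) + Pi.single j (d j)) := by
  intro i
  rcases eq_or_ne i j with rfl | hij
  · simp [add_mul]
  · simp [Pi.single_eq_of_ne hij, add_mul]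

end WeightedDegree

lemma exists_le_le_sum_eq {n : ℕ} {a m : Fin n → ℕ} (hle : a ≤ m) {s : ℕ}
    (has : ∑ i, a i ≤ s) (hsm : s ≤ ∑ i, m i) : ∃ c, a ≤ c ∧ c ≤ m ∧ ∑ i, c i = s := by
  induction s, has using Nat.le_induction with
  | base => exact ⟨a, le_rfl, hle, rfl⟩
  | succ s _ ih =>
    obtain ⟨c, hac, hcm, rfl⟩ := ih (by omega)
    obtain ⟨j, -, hj⟩ := Finset.exists_lt_of_sum_lt (by omega : ∑ i, c i < ∑ i, m i)
    refine ⟨c + Pi.single j 1, le_add_right hac, fun i => ?_, by simp [Finset.sum_add_distrib]⟩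
    rcases eq_or_ne i j with rfl | hij
    · simpa using hj
    · simpa [Pi.single_eq_of_ne hij] using hcm i

section Good

variable {K : Type*} [Field K] {n : ℕ} {I : Ideal (MvPolynomial (Fin n) K)} {d : Fin n → ℕ}

lemma mono_mul_mem_pow_sum (hμ : ∀ i, mono K (Pi.single i (d i)) ∈ I) (c : Fin n → ℕ) :
    mono K (fun i => c i * d i) ∈ I ^ ∑ i, c i := by
  rw [mono_eq_prod_X_pow, ← Finset.prod_pow_eq_pow_sum]
  refine Ideal.prod_mem_prod fun i _ => ?_
  rw [mul_comm, pow_mul, ← mono_single]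
  exact Ideal.pow_mem_pow (hμ i) _

namespace IsGood

lemma natCast_le_weightedDegree (hgood : IsGood I d) (hd : ∀ i, 0 < d i) {L : ℕ}
    {β : Fin n → ℕ} (hβ : mono K β ∈ I ^ L) :
    (L : ℚ) ≤ weightedDegree d β := by
  rcases L.eq_zero_or_pos with rfl | hL
  · exact_mod_cast weightedDegree_nonneg β
  have hN : ∀ N : ℕ, (L : ℚ) - 1 / (N + 1) ≤ weightedDegree d β := by
    intro N
    have hpow : mono K ((N + 1) • β) ∈ I ^ (L * (N + 1)) := by
      rw [mono_nsmul, pow_mul]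
      exact Ideal.pow_mem_pow hβ _
    obtain ⟨γ, hγβ, hγ⟩ := exists_isMinGen_le hpow
    have hLN : 1 ≤ L * (N + 1) := Nat.mul_pos hL N.succ_pos
    obtain ⟨e, he, hesum⟩ := hgood _ hLN γ hγ
    have hle := (sum_le_weightedDegree_of_inBox hd he).trans (weightedDegree_mono hγβ)
    rw [hesum, weightedDegree_nsmul, Nat.cast_sub hLN] at hle
    push_cast at hle
    calc (L : ℚ) - 1 / (N + 1) = (L * (N + 1) - 1) / (N + 1) := by field_simp
      _ ≤ weightedDegree d β := by rw [div_le_iff₀ (by positivity)]; linarith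
  by_contra! h
  obtain ⟨N, hN'⟩ := exists_nat_one_div_lt (sub_pos.2 h)
  linarith [hN N]

lemma isMinGen_corner (hgood : IsGood I d) (hd : ∀ i, 0 < d i)
    (hμ : ∀ i, mono K (Pi.single i (d i)) ∈ I) (c : Fin n → ℕ) (j : Fin n) :
    IsMinGen (I ^ (∑ i, c i + 1)) ((fun i => c i * d i) + Pi.single j (d j)) := by
  refine ⟨?_, fun β hβ hle => eq_of_le_of_weightedDegree_le hd hle ?_⟩
  · rw [mono_add, pow_succ]
    exact Ideal.mul_mem_mul (mono_mul_mem_pow_sum hμ c) (hμ j)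
  · rw [weightedDegree_corner hd]
    exact_mod_cast hgood.natCast_le_weightedDegree hd hβ

lemma exists_isMinGen_inBox_le (hgood : IsGood I d) (hd : ∀ i, 0 < d i)
    (hμ : ∀ i, mono K (Pi.single i (d i)) ∈ I) {a δ : Fin n → ℕ} {L : ℕ}
    (hL : ∑ i, a i < L) (haδ : ∀ i, a i * d i ≤ δ i) (hδ : mono K δ ∈ I ^ L) :
    ∃ c, a ≤ c ∧ ∑ i, c i = L - 1 ∧ ∃ α, IsMinGen (I ^ L) α ∧ InBox d c α ∧ α ≤ δ := by
  obtain ⟨α₀, hα₀δ, hα₀⟩ := exists_isMinGen_le hδ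
  obtain ⟨b, hb, hbsum⟩ := hgood L (by omega) α₀ hα₀
  by_cases hab : a ≤ b
  · exact ⟨b, hab, hbsum, α₀, hα₀, hb, hα₀δ⟩
  have hmδ : ∀ i, (a ⊔ b) i * d i ≤ δ i := fun i => by
    rcases le_total (a i) (b i) with h | h
    · simpa [h] using (hb i).1.trans (hα₀δ i)
    · simpa [h] using haδ i
  obtain ⟨i₀, hi₀⟩ : ∃ i, b i < a i := by simpa [Pi.le_def] using hab
  have hbm : ∑ i, b i < ∑ i, (a ⊔ b) i :=
    Finset.sum_lt_sum (fun i _ => le_sup_right) ⟨i₀, Finset.mem_univ _, by simp; omega⟩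
  obtain ⟨c, hac, hcm, hcsum⟩ := exists_le_le_sum_eq (le_sup_left : a ≤ a ⊔ b) (s := L - 1)
    (by omega) (by omega)
  obtain ⟨j, -, hj⟩ := Finset.exists_lt_of_sum_lt (by omega : ∑ i, c i < ∑ i, (a ⊔ b) i)
  have hα := hgood.isMinGen_corner hd hμ c j
  rw [hcsum, Nat.sub_add_cancel (by omega)] at hα
  refine ⟨c, hac, hcsum, _, hα, inBox_corner c j, fun i => ?_⟩
  refine le_trans ?_ (hmδ i)
  rcases eq_or_ne i j with rfl | hij
  · simpa [← Nat.succ_mul] using Nat.mul_le_mul_right (d i) hj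
  · simpa [Pi.single_eq_of_ne hij] using Nat.mul_le_mul_right (d i) (hcm i)

end IsGood

end Good

section Colon

variable {K : Type*} [Field K] {n : ℕ} (I : Ideal (MvPolynomial (Fin n) K)) (d : Fin n → ℕ)

lemma span_mono_mul_boxIdeal_le_colon (e a : Fin n → ℕ) :
    Ideal.span {mono K (fun i => e i * d i)} * boxIdeal I d (e + a) ≤
      (I ^ (∑ i, (e + a) i + 1)).colon (Ideal.span {mono K (fun i => a i * d i)}) := by
  rw [boxIdeal, Ideal.span_mul_span', Ideal.span_le]
  rintro _ ⟨_, rfl, _, ⟨α, ⟨hbox, hα⟩, rfl⟩, rfl⟩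
  dsimp only
  rw [SetLike.mem_coe, Submodule.mem_colon_span_singleton, smul_eq_mul, ← mono_add, ← mono_add]
  convert hα.1 using 2
  funext i
  have := (hbox i).1
  simp only [Pi.add_apply, Pi.sub_apply, add_mul] at this ⊢
  omega

lemma mono_mem_span_mono_mul_boxIdeal {a c α γ : Fin n → ℕ} (hac : a ≤ c)
    (hα : IsMinGen (I ^ (∑ i, c i + 1)) α) (hbox : InBox d c α)
    (hαγ : α ≤ γ + fun i => a i * d i) :
    mono K γ ∈ Ideal.span {mono K (fun i => (c - a) i * d i)} * boxIdeal I d (c - a + a) := by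
  have hca : c - a + a = c := tsub_add_cancel_of_le hac
  have hgen : mono K (α - fun i => (c - a + a) i * d i) ∈ boxIdeal I d (c - a + a) := by
    rw [hca]
    exact Ideal.subset_span ⟨α, ⟨hbox, hα⟩, rfl⟩
  have hmem : mono K ((fun i => (c - a) i * d i) + (α - fun i => (c - a + a) i * d i)) ∈
      Ideal.span {mono K (fun i => (c - a) i * d i)} * boxIdeal I d (c - a + a) := by
    rw [mono_add]
    exact Ideal.mul_mem_mul (Ideal.mem_span_singleton_self _) hgen
  refine mono_mem_of_le hmem fun i => ?_
  have h₁ := (hbox i).1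
  have h₂ := hαγ i
  have h₃ : a i * d i ≤ c i * d i := Nat.mul_le_mul_right _ (hac i)
  simp only [Pi.add_apply, Pi.sub_apply, Nat.sub_add_cancel (hac i), Nat.sub_mul] at h₂ ⊢
  omega

end Colon

/-- Lemma 10.8: for a good ideal `I`, nonnegative integers `a_1,…,a_n` with sum `a`
and `t ≥ 1`,
`I^{a+t} : ⟨μ_1^{a_1}⋯μ_n^{a_n}⟩ = Σ_{t_1+⋯+t_n = t-1} μ_1^{t_1}⋯μ_n^{t_n} · I_{t_1+a_1,…,t_n+a_n}`. -/
theorem colon_power_eq_sum {K : Type*} [Field K] {n : ℕ}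
    (I : Ideal (MvPolynomial (Fin n) K)) (d : Fin n → ℕ)
    (hI : MPrimaryWithCorners I d) (hgood : IsGood I d)
    (a : Fin n → ℕ) (t : ℕ) (ht : 1 ≤ t) :
    (I ^ (∑ i, a i + t)).colon (Ideal.span {mono K (fun i => a i * d i)}) =
      ⨆ tv : {v : Fin n → ℕ // ∑ i, v i = t - 1},
        Ideal.span {mono K (fun i => tv.1 i * d i)} * boxIdeal I d (tv.1 + a) := by
  have hd := hI.2.2.1
  have hμ : ∀ i, mono K (Pi.single i (d i)) ∈ I := fun i => (hI.2.2.2 i).1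
  refine le_antisymm (fun p hp => ?_) (iSup_le fun ⟨e, he⟩ => ?_)
  · rw [Submodule.mem_colon_span_singleton, smul_eq_mul] at hp
    refine mem_of_forall_mono_mem fun v hv => ?_
    obtain ⟨c, hac, hcsum, α, hα, hbox, hαv⟩ :=
      hgood.exists_isMinGen_inBox_le hd hμ (by omega) (fun i => Nat.le_add_left _ _)
        ((hI.1.pow _).mono_add_mem_of_mul_mem hp hv)
    have hsum : ∑ i, (c - a) i = t - 1 := by
      simp only [Pi.sub_apply, Finset.sum_tsub_distrib _ fun i _ => hac i]
      omega
    rw [show ∑ i, a i + t = ∑ i, c i + 1 by omega] at hα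
    exact Ideal.mem_iSup_of_mem (ι := {v : Fin n → ℕ // ∑ i, v i = t - 1}) ⟨c - a, hsum⟩
      (mono_mem_span_mono_mul_boxIdeal I d hac hα hbox hαv)
  · convert span_mono_mul_boxIdeal_le_colon I d e a using 3
    simp only [Pi.add_apply, Finset.sum_add_distrib]
    omega

end GasanovaRR
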